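/- arXiv:2206.12184 — 7 statements merged into one kernel-verified Lean document; each statement's English description precedes it below -/
import Mathlib

section
/- Let X be a Poisson random variable with mean α/m, where α>0 and m is a positive integer. Then for every n≥0, E[(mX+1)_{n,λ}] = D_{m,λ}(n,α), where D_{m,λ}(n,x) is the degenerate Dowling polynomial. Equivalently, e^{-α/m} Σ_{k=0}^∞ (mk+1)_{n,λ} (α/m)^k / k! = D_{m,λ}(n,α). -/
open Finset

/-- Degenerate falling factorial `(x)_{n,λ} = x(x-λ)⋯(x-(n-1)λ)`. -/
noncomputable def dfall (lam x : ℝ) (n : ℕ) : ℝ := ∏ i ∈ Finset.range n, (x - i * lam)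

/-- Ordinary falling factorial `(x)_n = x(x-1)⋯(x-n+1)`. -/
noncomputable def ffall (x : ℝ) (n : ℕ) : ℝ := ∏ i ∈ Finset.range n, (x - i)

/-!
Expanding the exponential, `(1 + λt)^{b/λ} e^{z (1 + λt)^{a/λ}} = ∑ₖ zᵏ/k! (1 + λt)^{(ak+b)/λ}`.
The `n`-th derivative of `(1 + λt)^{x/λ}` is `(x)_{n,λ} (1 + λt)^{x/λ - n}`; on the ball
`|λt| < 1/2` these are bounded, uniformly in `t`, by `Cₙ (ak + b + n|λ|)ⁿ Aᵏ`, which is summable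
against `zᵏ/k!`. So the series can be differentiated term by term, and at `t = 0` it gives
`∑ₖ (ak+b)_{n,λ} zᵏ/k!`. Taking `a = m`, `b = 1`, `z = α/m` and splitting `e^{-α/m}` off the
generating function gives the Poisson expectation.
-/

open Set Metric

lemma dfall_succ (lam x : ℝ) (n : ℕ) : dfall lam x (n + 1) = dfall lam x n * (x - n * lam) :=
  prod_range_succ _ n

lemma abs_dfall_le {lam x R : ℝ} (hx : |x| ≤ R) (n : ℕ) :
    |dfall lam x n| ≤ (R + n * |lam|) ^ n := by
  rw [dfall, abs_prod]
  calc ∏ i ∈ range n, |x - i * lam| ≤ ∏ _i ∈ range n, (R + n * |lam|) := by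
        refine prod_le_prod (fun _ _ => abs_nonneg _) fun i hi => ?_
        have hin : (i : ℝ) ≤ n := by exact_mod_cast (mem_range.1 hi).le
        calc |x - i * lam| ≤ |x| + i * |lam| := by
              simpa [abs_mul] using abs_sub x (i * lam)
          _ ≤ R + n * |lam| := by gcongr
    _ = (R + n * |lam|) ^ n := by rw [prod_const, card_range]

lemma rpow_le_two_rpow_abs {y : ℝ} (h₁ : 1 / 2 ≤ y) (h₂ : y ≤ 2) (q : ℝ) :
    y ^ q ≤ 2 ^ |q| := by
  have hy : 0 < y := by linarith
  have hlog : |Real.log y| ≤ Real.log 2 := by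
    refine abs_le.2 ⟨?_, Real.log_le_log hy h₂⟩
    have := Real.log_le_log (by norm_num) h₁
    rwa [one_div, Real.log_inv] at this
  rw [Real.rpow_def_of_pos hy, Real.rpow_def_of_pos two_pos, Real.exp_le_exp]
  calc Real.log y * q ≤ |Real.log y| * |q| := by rw [← abs_mul]; exact le_abs_self _
    _ ≤ Real.log 2 * |q| := by gcongr

lemma summable_affine_pow_mul_pow_div_factorial {a b : ℝ} (ha : 0 ≤ a) (hb : 0 ≤ b) (z : ℝ)
    (n : ℕ) : Summable fun k : ℕ => (a * k + b) ^ n * z ^ k / k.factorial := by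
  refine .of_norm_bounded
    ((Real.summable_pow_div_factorial (|z| * Real.exp a)).mul_left (n.factorial * Real.exp b))
    fun k => ?_
  have hpoly : (a * k + b) ^ n ≤ n.factorial * (Real.exp b * Real.exp a ^ k) :=
    calc (a * k + b) ^ n = (a * k + b) ^ n / n.factorial * n.factorial := by field_simp
      _ ≤ Real.exp (a * k + b) * n.factorial := by
          gcongr; exact Real.pow_div_factorial_le_exp _ (by positivity) n
      _ = n.factorial * (Real.exp b * Real.exp a ^ k) := by
          rw [Real.exp_add, ← Real.exp_nat_mul, mul_comm (k : ℝ) a]; ring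
  have hnorm : ‖(a * k + b) ^ n * z ^ k / k.factorial‖ =
      (a * k + b) ^ n * (|z| ^ k / k.factorial) := by
    rw [Real.norm_eq_abs, abs_div, abs_mul, abs_pow, abs_pow, Nat.abs_cast,
      abs_of_nonneg (by positivity : 0 ≤ a * k + b), mul_div_assoc]
  calc ‖(a * k + b) ^ n * z ^ k / k.factorial‖
      ≤ n.factorial * (Real.exp b * Real.exp a ^ k) * (|z| ^ k / k.factorial) := by
        rw [hnorm]; gcongr
    _ = _ := by ring

section TermwiseDeriv

variable {ι 𝕜 F : Type*} [NontriviallyNormedField 𝕜] [IsRCLikeNormedField 𝕜]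
  [NormedAddCommGroup F] [NormedSpace 𝕜 F] [CompleteSpace F]

theorem eqOn_iteratedDeriv_tsum {s : Set 𝕜} (hs : IsOpen s) (hs' : IsPreconnected s)
    {G : ℕ → ι → 𝕜 → F} (hG : ∀ n i, ∀ t ∈ s, HasDerivAt (G n i) (G (n + 1) i t) t)
    (hbound : ∀ n, ∃ u : ι → ℝ, Summable u ∧ ∀ i, ∀ t ∈ s, ‖G n i t‖ ≤ u i) (n : ℕ) :
    EqOn (iteratedDeriv n fun t => ∑' i, G 0 i t) (fun t => ∑' i, G n i t) s := by
  induction n with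
  | zero => simp [EqOn]
  | succ n ih =>
    intro t ht
    obtain ⟨u, hu, hGu⟩ := hbound (n + 1)
    obtain ⟨v, hv, hGv⟩ := hbound n
    rw [iteratedDeriv_succ, (ih.eventuallyEq_of_mem (hs.mem_nhds ht)).deriv_eq]
    exact (hasDerivAt_tsum_of_isPreconnected hu hs hs' (hG n) hGu ht
      (.of_norm_bounded hv fun i => hGv i t ht) ht).deriv

end TermwiseDeriv

/-- The `n`-th derivative of `t ↦ (1 + λt)^{x/λ}`. -/
noncomputable def degExpDeriv (lam x : ℝ) (n : ℕ) (t : ℝ) : ℝ :=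
  dfall lam x n * (1 + lam * t) ^ (x / lam - n)

@[simp]
lemma degExpDeriv_zero (lam x t : ℝ) : degExpDeriv lam x 0 t = (1 + lam * t) ^ (x / lam) := by
  simp [degExpDeriv, dfall]

@[simp]
lemma degExpDeriv_apply_zero (lam x : ℝ) (n : ℕ) : degExpDeriv lam x n 0 = dfall lam x n := by
  simp [degExpDeriv]

lemma hasDerivAt_degExpDeriv {lam : ℝ} (hlam : lam ≠ 0) (x : ℝ) (n : ℕ) {t : ℝ}
    (ht : 0 < 1 + lam * t) :
    HasDerivAt (degExpDeriv lam x n) (degExpDeriv lam x (n + 1) t) t := by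
  have hlin : HasDerivAt (fun t => 1 + lam * t) lam t := by
    simpa using ((hasDerivAt_id t).const_mul lam).const_add 1
  have hexp : lam * (x / lam - n) = x - n * lam := by field_simp
  refine ((hlin.rpow_const (p := x / lam - n) (.inl ht.ne')).const_mul
    (dfall lam x n)).congr_deriv ?_
  rw [degExpDeriv, dfall_succ, Nat.cast_succ, sub_add_eq_sub_sub, hexp]
  ring

lemma abs_degExpDeriv_le {lam x R t : ℝ} (hx : |x| ≤ R) (ht : |lam * t| ≤ 1 / 2) (n : ℕ) :
    |degExpDeriv lam x n t| ≤ (R + n * |lam|) ^ n * 2 ^ (R / |lam| + n) := by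
  obtain ⟨ht₁, ht₂⟩ := abs_le.1 ht
  have hexp : |x / lam - n| ≤ R / |lam| + n := by
    calc |x / lam - n| ≤ |x| / |lam| + n := by simpa [abs_div] using abs_sub (x / lam) n
      _ ≤ R / |lam| + n := by gcongr
  rw [degExpDeriv, abs_mul, abs_of_nonneg (Real.rpow_nonneg (by linarith) _)]
  have hpow : (1 + lam * t) ^ (x / lam - n) ≤ 2 ^ (R / |lam| + n) :=
    (rpow_le_two_rpow_abs (by linarith) (by linarith) _).trans
      (Real.rpow_le_rpow_of_exponent_le one_le_two hexp)
  have hR : 0 ≤ R + n * |lam| := by have := (abs_nonneg x).trans hx; positivity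
  exact mul_le_mul (abs_dfall_le hx n) hpow (Real.rpow_nonneg (by linarith) _) (pow_nonneg hR n)

lemma degExp_mul_exp_degExp_eq_tsum {lam t : ℝ} (ht : 0 < 1 + lam * t) (a b z : ℝ) :
    (1 + lam * t) ^ (b / lam) * Real.exp (z * (1 + lam * t) ^ (a / lam)) =
      ∑' k : ℕ, z ^ k / k.factorial * degExpDeriv lam (a * k + b) 0 t := by
  rw [Real.exp_eq_exp_ℝ, NormedSpace.exp_eq_tsum_div, ← tsum_mul_left]
  refine tsum_congr fun k => ?_
  have hexp : b / lam + a / lam * k = (a * k + b) / lam := by ring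
  rw [degExpDeriv_zero, mul_pow, ← Real.rpow_natCast ((1 + lam * t) ^ (a / lam)),
    ← Real.rpow_mul ht.le, ← hexp, Real.rpow_add ht]
  ring

lemma exists_summable_bound_degExpDeriv (lam : ℝ) {a b : ℝ} (ha : 0 ≤ a) (hb : 0 ≤ b) (z : ℝ)
    (n : ℕ) : ∃ u : ℕ → ℝ, Summable u ∧ ∀ k : ℕ, ∀ t, |lam * t| ≤ 1 / 2 →
      ‖z ^ k / k.factorial * degExpDeriv lam (a * k + b) n t‖ ≤ u k := by
  refine ⟨fun k => 2 ^ (b / |lam| + n) *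
      ((a * k + (b + n * |lam|)) ^ n * (|z| * 2 ^ (a / |lam|)) ^ k / k.factorial),
    (summable_affine_pow_mul_pow_div_factorial ha (by positivity) _ n).mul_left _,
    fun k t ht => ?_⟩
  have hx : |a * k + b| ≤ a * k + b := (abs_of_nonneg (by positivity)).le
  have hgeom : (2 : ℝ) ^ ((a * k + b) / |lam| + n) =
      2 ^ (b / |lam| + n) * (2 ^ (a / |lam|)) ^ k := by
    rw [← Real.rpow_natCast (2 ^ (a / |lam|)), ← Real.rpow_mul zero_le_two,
      ← Real.rpow_add two_pos]
    ring_nf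
  calc ‖z ^ k / k.factorial * degExpDeriv lam (a * k + b) n t‖
      = |z| ^ k / k.factorial * |degExpDeriv lam (a * k + b) n t| := by simp
    _ ≤ |z| ^ k / k.factorial *
        ((a * k + b + n * |lam|) ^ n * 2 ^ ((a * k + b) / |lam| + n)) := by
      gcongr; exact abs_degExpDeriv_le hx ht n
    _ = _ := by rw [hgeom]; ring

theorem iteratedDeriv_degExp_mul_exp_degExp {lam : ℝ} (hlam : lam ≠ 0) {a b : ℝ} (ha : 0 ≤ a)
    (hb : 0 ≤ b) (z : ℝ) (n : ℕ) :
    iteratedDeriv n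
        (fun t => (1 + lam * t) ^ (b / lam) * Real.exp (z * (1 + lam * t) ^ (a / lam))) 0 =
      ∑' k : ℕ, dfall lam (a * k + b) n * z ^ k / k.factorial := by
  set s := ball (0 : ℝ) (1 / (2 * |lam|))
  have h0 : (0 : ℝ) ∈ s := mem_ball_self (by positivity)
  have hsmall : ∀ t ∈ s, |lam * t| ≤ 1 / 2 := fun t ht => by
    rw [mem_ball_zero_iff, Real.norm_eq_abs, lt_div_iff₀ (by positivity)] at ht
    rw [abs_mul]
    linarith
  have hpos : ∀ t ∈ s, 0 < 1 + lam * t := fun t ht => by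
    linarith [neg_abs_le (lam * t), hsmall t ht]
  let G n (k : ℕ) t := z ^ k / k.factorial * degExpDeriv lam (a * k + b) n t
  have hseries : EqOn
      (fun t => (1 + lam * t) ^ (b / lam) * Real.exp (z * (1 + lam * t) ^ (a / lam)))
      (fun t => ∑' k, G 0 k t) s := fun t ht =>
    degExp_mul_exp_degExp_eq_tsum (hpos t ht) a b z
  have hbound n : ∃ u : ℕ → ℝ, Summable u ∧ ∀ k, ∀ t ∈ s, ‖G n k t‖ ≤ u k :=
    (exists_summable_bound_degExpDeriv lam ha hb z n).imp fun _ ⟨hu, hbd⟩ =>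
      ⟨hu, fun k t ht => hbd k t (hsmall t ht)⟩
  rw [(hseries.eventuallyEq_of_mem (isOpen_ball.mem_nhds h0)).iteratedDeriv_eq,
    eqOn_iteratedDeriv_tsum (G := G) isOpen_ball (convex_ball _ _).isPreconnected
      (fun n k t ht => (hasDerivAt_degExpDeriv hlam _ n (hpos t ht)).const_mul _) hbound n h0]
  refine tsum_congr fun k => ?_
  simp only [G, degExpDeriv_apply_zero]
  ring

theorem stmt1_general (m : ℕ) (α lam : ℝ) (hlam : lam ≠ 0)
    (D : ℕ → ℝ)
    (hD : ∀ n : ℕ, iteratedDeriv n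
        (fun t : ℝ => (1 + lam * t) ^ ((1 : ℝ) / lam) *
          Real.exp ((α / m) * ((1 + lam * t) ^ ((m : ℝ) / lam) - 1))) 0 = D n) :
    ∀ n : ℕ,
      Real.exp (-(α / m)) *
        ∑' k : ℕ, dfall lam ((m : ℝ) * k + 1) n * (α / m) ^ k / (Nat.factorial k) = D n := by
  intro n
  have hfactor : (fun t : ℝ => (1 + lam * t) ^ ((1 : ℝ) / lam) *
      Real.exp ((α / m) * ((1 + lam * t) ^ ((m : ℝ) / lam) - 1))) = fun t =>
        Real.exp (-(α / m)) * ((1 + lam * t) ^ ((1 : ℝ) / lam) *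
          Real.exp ((α / m) * (1 + lam * t) ^ ((m : ℝ) / lam))) := by
    funext t
    rw [mul_sub, mul_one, sub_eq_add_neg, Real.exp_add]
    ring
  rw [← hD n, hfactor, iteratedDeriv_const_mul_field,
    iteratedDeriv_degExp_mul_exp_degExp hlam m.cast_nonneg zero_le_one]

theorem stmt1 (m : ℕ) (hm : 0 < m) (α lam : ℝ) (hα : 0 < α) (hlam : lam ≠ 0)
    (D : ℕ → ℝ)
    (hD : ∀ n : ℕ, iteratedDeriv n
        (fun t : ℝ => (1 + lam * t) ^ ((1 : ℝ) / lam) *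
          Real.exp ((α / m) * ((1 + lam * t) ^ ((m : ℝ) / lam) - 1))) 0 = D n) :
    ∀ n : ℕ,
      Real.exp (-(α / m)) *
        ∑' k : ℕ, dfall lam ((m : ℝ) * k + 1) n * (α / m) ^ k / (Nat.factorial k) = D n :=
  stmt1_general m α lam hlam D hD
end

section
/- For n≥0 and λ a nonzero real, φ_{n,λ}(α) + (d/dα)φ_{n,λ}(α) = Σ_{k=0}^n ((k+1)S_{2,λ}(n,k+1) + S_{2,λ}(n,k)) α^k, and this quantity equals E[(X+1)_{n,λ}] for X a Poisson random variable with parameter α (i.e., equals e^{-α} Σ_{i=0}^∞ (i+1)_{n,λ} α^i/i!). -/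
open Finset

/-!
For a Poisson variable `X` of parameter `α` the factorial moments are `E[(X)_k] = α ^ k`, and the
Pascal rule `(x + 1)_k = (x)_k + k (x)_{k-1}` turns this into `E[(X + 1)_k] = α ^ k + k α ^ (k - 1)`.
Expanding `(X + 1)_{n,λ}` in falling factorials with the coefficients `S_{2,λ}(n, k)` therefore gives
`E[(X + 1)_{n,λ}] = φ_{n,λ}(α) + φ'_{n,λ}(α)`; shifting the index of the derivative, which is
possible because `S_{2,λ}(n, n + 1) = 0`, gives the coefficient form.
-/

open Nat

lemma ffall_eq_descPochhammer_eval (x : ℝ) (k : ℕ) : ffall x k = (descPochhammer ℝ k).eval x :=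
  (descPochhammer_eval_eq_prod_range k x).symm

lemma ffall_natCast (m k : ℕ) : ffall (m : ℝ) k = m.descFactorial k := by
  rw [ffall_eq_descPochhammer_eval, descPochhammer_eval_eq_descFactorial]

lemma ffall_add_one (x : ℝ) (k : ℕ) : ffall (x + 1) k = ffall x k + k * ffall x (k - 1) := by
  cases k with
  | zero => simp [ffall]
  | succ k =>
    have shift : ffall (x + 1) (k + 1) = (x + 1) * ffall x k := by
      rw [ffall, prod_range_succ', ffall, mul_comm]
      push_cast
      simp_rw [add_sub_add_right_eq_sub, sub_zero]
    rw [shift, show ffall x (k + 1) = ffall x k * (x - k) from prod_range_succ _ _,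
      Nat.add_sub_cancel]
    push_cast
    ring

lemma ffall_natCast_add_div_factorial (j k : ℕ) :
    ffall ((j + k : ℕ) : ℝ) k / (j + k)! = 1 / j ! := by
  have hfac : (j + k)! = j ! * (j + k).descFactorial k := by
    simpa using (Nat.factorial_mul_descFactorial (Nat.le_add_left k j)).symm
  have hpos : 0 < ((j + k).descFactorial k : ℝ) :=
    Nat.cast_pos.2 (Nat.descFactorial_pos.2 (Nat.le_add_left k j))
  rw [ffall_natCast, hfac, Nat.cast_mul]
  field_simp

lemma hasSum_ffall_natCast_mul_pow_div_factorial (α : ℝ) (k : ℕ) :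
    HasSum (fun i : ℕ => ffall i k * α ^ i / i !) (α ^ k * Real.exp α) := by
  have hexp : HasSum (fun j : ℕ => α ^ j / j !) (Real.exp α) := by
    rw [Real.exp_eq_exp_ℝ]
    exact NormedSpace.expSeries_div_hasSum_exp α
  have hshift : HasSum (fun j : ℕ => ffall ((j + k : ℕ) : ℝ) k * α ^ (j + k) / (j + k)!)
      (α ^ k * Real.exp α) := by
    refine (hexp.mul_left (α ^ k)).congr_fun fun j => ?_
    rw [mul_div_right_comm, ffall_natCast_add_div_factorial]
    ring
  have hinitial : ∑ i ∈ range k, ffall i k * α ^ i / i ! = 0 :=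
    sum_eq_zero fun i hi => by
      rw [ffall_natCast, Nat.descFactorial_eq_zero_iff_lt.2 (mem_range.1 hi)]
      simp
  simpa only [hinitial, add_zero] using
    (hasSum_nat_add_iff (f := fun i : ℕ => ffall i k * α ^ i / i !) k).1 hshift

lemma hasSum_ffall_natCast_add_one_mul_pow_div_factorial (α : ℝ) (k : ℕ) :
    HasSum (fun i : ℕ => ffall ((i : ℝ) + 1) k * α ^ i / i !)
      ((α ^ k + k * α ^ (k - 1)) * Real.exp α) := by
  convert (hasSum_ffall_natCast_mul_pow_div_factorial α k).add
    ((hasSum_ffall_natCast_mul_pow_div_factorial α (k - 1)).mul_left (k : ℝ)) using 1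
  · ext i
    rw [ffall_add_one]
    ring
  · ring

lemma hasSum_sum_mul_ffall_natCast_add_one_mul_pow_div_factorial (s : Finset ℕ) (c : ℕ → ℝ)
    (α : ℝ) :
    HasSum (fun i : ℕ => (∑ k ∈ s, c k * ffall ((i : ℝ) + 1) k) * α ^ i / i !)
      (Real.exp α * ∑ k ∈ s, c k * (α ^ k + k * α ^ (k - 1))) := by
  have hsum := hasSum_sum (s := s) fun k _ =>
    (hasSum_ffall_natCast_add_one_mul_pow_div_factorial α k).mul_left (c k)
  rw [mul_sum]
  simp_rw [mul_comm (Real.exp α), ← mul_assoc] at hsum ⊢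
  refine hsum.congr_fun fun i => ?_
  rw [sum_mul, sum_div]
  exact sum_congr rfl fun k _ => by ring

lemma hasDerivAt_sum_mul_pow (s : Finset ℕ) (c : ℕ → ℝ) (x : ℝ) :
    HasDerivAt (fun a : ℝ => ∑ k ∈ s, c k * a ^ k) (∑ k ∈ s, c k * (k * x ^ (k - 1))) x :=
  HasDerivAt.fun_sum fun k _ => (hasDerivAt_pow k x).const_mul (c k)

lemma sum_range_succ_mul_natCast_mul_pow_pred {n : ℕ} {c : ℕ → ℝ} (hc : c (n + 1) = 0) (x : ℝ) :
    ∑ k ∈ range (n + 1), c k * (k * x ^ (k - 1))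
      = ∑ k ∈ range (n + 1), (k + 1 : ℝ) * c (k + 1) * x ^ k := by
  rw [sum_range_succ', sum_range_succ _ n, hc]
  push_cast
  simp only [zero_mul, mul_zero, add_zero]
  exact sum_congr rfl fun k _ => by ring

theorem stmt4_general (lam α : ℝ) (n : ℕ)
    (S : ℕ → ℕ → ℝ)
    (hS : ∀ (x : ℝ) (N : ℕ),
      dfall lam x N = ∑ k ∈ Finset.range (N + 1), S N k * ffall x k)
    (hS0 : S n (n + 1) = 0) :
    ((∑ k ∈ Finset.range (n + 1), S n k * α ^ k) +
        deriv (fun a : ℝ => ∑ k ∈ Finset.range (n + 1), S n k * a ^ k) α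
      = ∑ k ∈ Finset.range (n + 1), ((k + 1 : ℝ) * S n (k + 1) + S n k) * α ^ k) ∧
    ((∑ k ∈ Finset.range (n + 1), S n k * α ^ k) +
        deriv (fun a : ℝ => ∑ k ∈ Finset.range (n + 1), S n k * a ^ k) α
      = Real.exp (-α) * ∑' i : ℕ, dfall lam ((i : ℝ) + 1) n * α ^ i / (Nat.factorial i)) := by
  rw [(hasDerivAt_sum_mul_pow (range (n + 1)) (S n) α).deriv]
  refine ⟨?_, ?_⟩
  · rw [sum_range_succ_mul_natCast_mul_pow_pred hS0, ← sum_add_distrib]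
    exact sum_congr rfl fun k _ => by ring
  · simp_rw [hS]
    rw [(hasSum_sum_mul_ffall_natCast_add_one_mul_pow_div_factorial _ (S n) α).tsum_eq,
      ← mul_assoc, ← Real.exp_add, neg_add_cancel, Real.exp_zero, one_mul, ← sum_add_distrib]
    exact sum_congr rfl fun k _ => by ring

theorem stmt4 (lam α : ℝ) (hlam : lam ≠ 0) (hα : 0 < α) (n : ℕ)
    (S : ℕ → ℕ → ℝ)
    (hS : ∀ (x : ℝ) (N : ℕ),
      dfall lam x N = ∑ k ∈ Finset.range (N + 1), S N k * ffall x k)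
    (hS0 : S n (n + 1) = 0) :
    ((∑ k ∈ Finset.range (n + 1), S n k * α ^ k) +
        deriv (fun a : ℝ => ∑ k ∈ Finset.range (n + 1), S n k * a ^ k) α
      = ∑ k ∈ Finset.range (n + 1), ((k + 1 : ℝ) * S n (k + 1) + S n k) * α ^ k) ∧
    ((∑ k ∈ Finset.range (n + 1), S n k * α ^ k) +
        deriv (fun a : ℝ => ∑ k ∈ Finset.range (n + 1), S n k * a ^ k) α
      = Real.exp (-α) * ∑' i : ℕ, dfall lam ((i : ℝ) + 1) n * α ^ i / (Nat.factorial i)) :=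
  stmt4_general lam α n S hS hS0
end

section
/- Let X be a Poisson random variable with mean α/m. Then for n, r ≥ 0, D^{(r)}_{m,λ}(n,α) = Σ_{k=0}^n C(n,k) (r)_{n-k,λ} m^k φ_{k,λ/m}(α/m). -/
open Finset

/-!
The generating function factors as `(1 + λt)^{r/λ} · B(mt)`, where `B` is the exponential
generating function of `φ_{k,λ/m}(α/m)`. Leibniz's rule at `t = 0` turns the product into the
binomial convolution: the first factor contributes `λ^j (r/λ)_j = (r)_{j,λ}`, and the rescaling
`t ↦ mt` contributes `m^k`.
-/

theorem iteratedDeriv_comp_const_mul_of_ne_zero {𝕜 F : Type*} [NontriviallyNormedField 𝕜]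
    [NormedAddCommGroup F] [NormedSpace 𝕜 F] {c : 𝕜} (hc : c ≠ 0) (f : 𝕜 → F) (n : ℕ) (x : 𝕜) :
    iteratedDeriv n (fun y => f (c * y)) x = c ^ n • iteratedDeriv n f (c * x) := by
  let g : 𝕜 ≃L[𝕜] 𝕜 := ContinuousLinearEquiv.smulLeft (Units.mk0 c hc)
  have h := g.iteratedFDerivWithin_comp_right f uniqueDiffOn_univ (Set.mem_univ (g x)) n
  simp only [Set.preimage_univ, iteratedFDerivWithin_univ] at h
  rw [iteratedDeriv_eq_iteratedFDeriv, iteratedDeriv_eq_iteratedFDeriv]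
  change iteratedFDeriv 𝕜 n (f ∘ g) x _ = _
  rw [h, ContinuousMultilinearMap.compContinuousLinearMap_apply]
  simp only [g, ContinuousLinearEquiv.coe_coe, ContinuousLinearEquiv.smulLeft_apply_apply,
    Units.smul_mk0, smul_eq_mul, mul_one]
  simpa using (iteratedFDeriv 𝕜 n f (c * x)).map_smul_univ (fun _ => c) (fun _ => 1)

theorem dfall_eq_pow_mul_descPochhammer_eval {lam : ℝ} (hlam : lam ≠ 0) (x : ℝ) (n : ℕ) :
    dfall lam x n = lam ^ n * (descPochhammer ℝ n).eval (x / lam) := by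
  rw [descPochhammer_eval_eq_prod_range, ← card_range n, ← prod_const, card_range,
    ← prod_mul_distrib, dfall]
  refine prod_congr rfl fun i _ => ?_
  field_simp

theorem iteratedDeriv_one_add_mul_rpow_zero (lam q : ℝ) (n : ℕ) :
    iteratedDeriv n (fun t : ℝ => (1 + lam * t) ^ q) 0 =
      lam ^ n * (descPochhammer ℝ n).eval q := by
  rcases eq_or_ne lam 0 with rfl | hlam
  · cases n <;> simp [iteratedDeriv_const]
  rw [iteratedDeriv_comp_const_mul_of_ne_zero hlam (fun u : ℝ => (1 + u) ^ q), smul_eq_mul,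
    iteratedDeriv_comp_const_add n (fun u : ℝ => u ^ q) 1, iteratedDeriv_eq_iterate]
  simp [Real.iter_deriv_rpow_const]

theorem contDiffAt_one_add_mul_rpow_zero (lam q : ℝ) (n : WithTop ℕ∞) :
    ContDiffAt ℝ n (fun t : ℝ => (1 + lam * t) ^ q) 0 :=
  (contDiffAt_const.add (contDiffAt_const.mul contDiffAt_id)).rpow_const_of_ne (by simp)

theorem stmt6_general (m : ℕ) (hm : 0 < m) (r : ℕ) (α lam : ℝ) (hlam : lam ≠ 0)
    (D : ℕ → ℝ)
    (hD : ∀ n : ℕ, iteratedDeriv n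
        (fun t : ℝ => (1 + lam * t) ^ ((r : ℝ) / lam) *
          Real.exp ((α / m) * ((1 + lam * t) ^ ((m : ℝ) / lam) - 1))) 0 = D n)
    (phi : ℕ → ℝ)
    (hphi : ∀ n : ℕ, iteratedDeriv n
        (fun t : ℝ => Real.exp ((α / m) * ((1 + (lam / m) * t) ^ ((m : ℝ) / lam) - 1))) 0
      = phi n) :
    ∀ n : ℕ,
      D n = ∑ k ∈ Finset.range (n + 1),
        (n.choose k : ℝ) * dfall lam (r : ℝ) (n - k) * (m : ℝ) ^ k * phi k := by
  intro n
  have hm' : (m : ℝ) ≠ 0 := Nat.cast_ne_zero.mpr hm.ne'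
  set A : ℝ → ℝ := fun t => (1 + lam * t) ^ ((r : ℝ) / lam)
  set E : ℝ → ℝ := fun t => Real.exp ((α / m) * ((1 + lam * t) ^ ((m : ℝ) / lam) - 1))
  have hE : ContDiffAt ℝ n E 0 :=
    Real.contDiff_exp.contDiffAt.comp 0
      (contDiffAt_const.mul ((contDiffAt_one_add_mul_rpow_zero _ _ n).sub contDiffAt_const))
  set B : ℝ → ℝ := fun u => Real.exp ((α / m) * ((1 + (lam / m) * u) ^ ((m : ℝ) / lam) - 1))
  have hE_scale : E = fun t => B (m * t) := by
    funext t
    simp only [E, B, ← mul_assoc, div_mul_cancel₀ _ hm']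
  rw [← hD, show (fun t => A t * E t) = fun t => E t * A t from funext fun t => mul_comm _ _,
    iteratedDeriv_fun_mul hE (contDiffAt_one_add_mul_rpow_zero _ _ n)]
  refine sum_congr rfl fun k _ => ?_
  rw [hE_scale, iteratedDeriv_comp_const_mul_of_ne_zero hm' B, mul_zero, hphi, smul_eq_mul,
    iteratedDeriv_one_add_mul_rpow_zero, ← dfall_eq_pow_mul_descPochhammer_eval hlam]
  ring

theorem stmt6 (m : ℕ) (hm : 0 < m) (r : ℕ) (α lam : ℝ) (hα : 0 < α) (hlam : lam ≠ 0)
    (D : ℕ → ℝ)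
    (hD : ∀ n : ℕ, iteratedDeriv n
        (fun t : ℝ => (1 + lam * t) ^ ((r : ℝ) / lam) *
          Real.exp ((α / m) * ((1 + lam * t) ^ ((m : ℝ) / lam) - 1))) 0 = D n)
    (phi : ℕ → ℝ)
    (hphi : ∀ n : ℕ, iteratedDeriv n
        (fun t : ℝ => Real.exp ((α / m) * ((1 + (lam / m) * t) ^ ((m : ℝ) / lam) - 1))) 0
      = phi n) :
    ∀ n : ℕ,
      D n = ∑ k ∈ Finset.range (n + 1),
        (n.choose k : ℝ) * dfall lam (r : ℝ) (n - k) * (m : ℝ) ^ k * phi k :=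
  stmt6_general m hm r α lam hlam D hD phi hphi
end

section
/- For n≥0 and X a Poisson random variable with mean α/m, D^{(r)}_{m,λ}(n,α) = Σ_{j=0}^n (Σ_{k=j}^n W^{(r)}_{m,λ}(n,k) m^k S_1(k,j)) φ_j(α/m). -/
open Finset

/-! The identity is a formal consequence of Stirling inversion. Writing `t = α / m`, the Stirling
expansions give `∑ⱼ S₁(k, j) φⱼ(t) = tᵏ`, because `∑ⱼ S₁(k, j) S₂(j, i) = δᵢₖ`; the latter holds
since the falling factorials `(x)₀, …, (x)ₖ` are linearly independent, as one sees by evaluating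
at `x = 0, 1, …, k`. Substituting into `∑ₖ W(n, k) mᵏ tᵏ` and exchanging the two sums gives the
claim. -/

theorem sum_range_sum_Icc_comm {M : Type*} [AddCommMonoid M] (k : ℕ) (f : ℕ → ℕ → M) :
    ∑ i ∈ range (k + 1), ∑ j ∈ Icc i k, f i j = ∑ j ∈ range (k + 1), ∑ i ∈ range (j + 1), f i j := by
  simp_rw [← Ico_add_one_right_eq_Icc, range_eq_Ico]
  exact sum_Ico_Ico_comm 0 (k + 1) f

theorem ffall_natCast_of_lt {i j : ℕ} (h : i < j) : ffall (i : ℝ) j = 0 :=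
  prod_eq_zero (mem_range.mpr h) (sub_self _)

theorem ffall_natCast_self_pos (i : ℕ) : 0 < ffall (i : ℝ) i :=
  prod_pos fun _ hj => sub_pos.mpr (Nat.cast_lt.mpr (mem_range.mp hj))

theorem eq_zero_of_sum_mul_ffall_eq_zero {k : ℕ} {c : ℕ → ℝ}
    (h : ∀ x : ℝ, ∑ i ∈ range (k + 1), c i * ffall x i = 0) {i : ℕ} (hik : i ≤ k) : c i = 0 := by
  induction i using Nat.strong_induction_on with
  | _ i ih =>
    have hi : c i * ffall (i : ℝ) i = 0 := by
      rw [← h i, sum_eq_single_of_mem i (mem_range.mpr (Nat.lt_succ_of_le hik))]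
      intro j hj hji
      rcases lt_or_gt_of_ne hji with hlt | hgt
      · rw [ih j hlt (by omega), zero_mul]
      · rw [ffall_natCast_of_lt hgt, mul_zero]
    exact (mul_eq_zero.mp hi).resolve_right (ffall_natCast_self_pos i).ne'

section StirlingInversion

variable {S1 S2 : ℕ → ℕ → ℝ}
  (hS1 : ∀ (x : ℝ) (N : ℕ), ffall x N = ∑ k ∈ range (N + 1), S1 N k * x ^ k)
  (hS2 : ∀ (x : ℝ) (N : ℕ), x ^ N = ∑ k ∈ range (N + 1), S2 N k * ffall x k)
include hS1 hS2

theorem sum_Icc_stirling_mul_stirling {k i : ℕ} (hik : i ≤ k) :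
    ∑ j ∈ Icc i k, S1 k j * S2 j i = if i = k then 1 else 0 := by
  have hexpand : ∀ x : ℝ,
      ∑ i ∈ range (k + 1), (∑ j ∈ Icc i k, S1 k j * S2 j i) * ffall x i = ffall x k := by
    intro x
    calc ∑ i ∈ range (k + 1), (∑ j ∈ Icc i k, S1 k j * S2 j i) * ffall x i
        = ∑ j ∈ range (k + 1), ∑ i ∈ range (j + 1), S1 k j * S2 j i * ffall x i := by
          simp_rw [sum_mul]
          exact sum_range_sum_Icc_comm k _
      _ = ∑ j ∈ range (k + 1), S1 k j * x ^ j := by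
          simp_rw [hS2 x, mul_sum, mul_assoc]
      _ = ffall x k := (hS1 x k).symm
  refine sub_eq_zero.mp (eq_zero_of_sum_mul_ffall_eq_zero (c := fun i =>
    (∑ j ∈ Icc i k, S1 k j * S2 j i) - if i = k then 1 else 0) (fun x => ?_) hik)
  simp [sub_mul, sum_sub_distrib, hexpand, ite_mul]

theorem sum_stirling_mul_bell_eq_pow (k : ℕ) (t : ℝ) :
    ∑ j ∈ range (k + 1), S1 k j * ∑ i ∈ range (j + 1), S2 j i * t ^ i = t ^ k := by
  calc ∑ j ∈ range (k + 1), S1 k j * ∑ i ∈ range (j + 1), S2 j i * t ^ i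
      = ∑ i ∈ range (k + 1), (∑ j ∈ Icc i k, S1 k j * S2 j i) * t ^ i := by
        simp_rw [sum_mul, sum_range_sum_Icc_comm k, mul_sum, mul_assoc]
    _ = ∑ i ∈ range (k + 1), (if i = k then 1 else 0) * t ^ i := by
        refine sum_congr rfl fun i hi => ?_
        rw [sum_Icc_stirling_mul_stirling hS1 hS2 (Nat.lt_succ_iff.mp (mem_range.mp hi))]
    _ = t ^ k := by simp [ite_mul]

end StirlingInversion

theorem stmt8_general (m : ℕ) (hm : 0 < m) (α : ℝ)
    (W : ℕ → ℕ → ℝ)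
    (S1 S2 : ℕ → ℕ → ℝ)
    (hS1 : ∀ (x : ℝ) (N : ℕ),
      ffall x N = ∑ k ∈ Finset.range (N + 1), S1 N k * x ^ k)
    (hS2 : ∀ (x : ℝ) (N : ℕ),
      x ^ N = ∑ k ∈ Finset.range (N + 1), S2 N k * ffall x k)
    (n : ℕ) :
    (∑ k ∈ Finset.range (n + 1), W n k * α ^ k)
      = ∑ j ∈ Finset.range (n + 1),
          (∑ k ∈ Finset.Icc j n, W n k * (m : ℝ) ^ k * S1 k j) *
          (∑ i ∈ Finset.range (j + 1), S2 j i * (α / m) ^ i) := by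
  have hpow : ∀ k, (m : ℝ) ^ k * (α / m) ^ k = α ^ k := fun k => by
    rw [← mul_pow, mul_div_cancel₀ α (Nat.cast_ne_zero.mpr hm.ne')]
  calc ∑ k ∈ range (n + 1), W n k * α ^ k
      = ∑ k ∈ range (n + 1), W n k * (m : ℝ) ^ k *
          ∑ j ∈ range (k + 1), S1 k j * ∑ i ∈ range (j + 1), S2 j i * (α / m) ^ i := by
        simp_rw [sum_stirling_mul_bell_eq_pow hS1 hS2, mul_assoc, hpow]
    _ = ∑ k ∈ range (n + 1), ∑ j ∈ range (k + 1),
          W n k * (m : ℝ) ^ k * S1 k j * ∑ i ∈ range (j + 1), S2 j i * (α / m) ^ i := by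
        simp_rw [mul_sum, mul_assoc]
    _ = _ := by
        rw [← sum_range_sum_Icc_comm n]
        simp_rw [sum_mul]

theorem stmt8 (m : ℕ) (hm : 0 < m) (r : ℕ) (α lam : ℝ) (hα : 0 < α) (hlam : lam ≠ 0)
    (W : ℕ → ℕ → ℝ)
    (hW : ∀ (x : ℝ) (N : ℕ),
      dfall lam ((m : ℝ) * x + r) N = ∑ k ∈ Finset.range (N + 1), W N k * (m : ℝ) ^ k * ffall x k)
    (S1 S2 : ℕ → ℕ → ℝ)
    (hS1 : ∀ (x : ℝ) (N : ℕ),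
      ffall x N = ∑ k ∈ Finset.range (N + 1), S1 N k * x ^ k)
    (hS2 : ∀ (x : ℝ) (N : ℕ),
      x ^ N = ∑ k ∈ Finset.range (N + 1), S2 N k * ffall x k)
    (n : ℕ) :
    (∑ k ∈ Finset.range (n + 1), W n k * α ^ k)
      = ∑ j ∈ Finset.range (n + 1),
          (∑ k ∈ Finset.Icc j n, W n k * (m : ℝ) ^ k * S1 k j) *
          (∑ i ∈ Finset.range (j + 1), S2 j i * (α / m) ^ i) :=
  stmt8_general m hm α W S1 S2 hS1 hS2 n
end

section
/- For n, j ≥ 0, the degenerate r-Whitney numbers of the second kind satisfy W^{(r)}_{m,λ}(n,j) = Σ_{l=j}^n C(n,l) (r)_{n-l,λ} m^{l-j} S_{2,λ/m}(l,j). -/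
open Finset Polynomial

lemma dfall_zero_left (x : ℝ) (n : ℕ) : dfall 0 x n = x ^ n := by
  simp [dfall]

lemma dfall_eq_pow_mul_descPochhammer {lam : ℝ} (hlam : lam ≠ 0) (x : ℝ) (n : ℕ) :
    dfall lam x n = lam ^ n * (descPochhammer ℤ n).smeval (x / lam) := by
  rw [← aeval_eq_smeval, ← eval_map_algebraMap, descPochhammer_map,
    descPochhammer_eval_eq_prod_range, pow_eq_prod_const, ← prod_mul_distrib, dfall]
  refine prod_congr rfl fun i _ => ?_
  field_simp

/-- For `lam ≠ 0` this is Chu–Vandermonde for `descPochhammer`, since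
`(x)_{n,λ} = λ^n (x/λ)_n`; for `lam = 0` it is the binomial theorem. -/
lemma dfall_add (lam a b : ℝ) (n : ℕ) :
    dfall lam (a + b) n =
      ∑ ij ∈ antidiagonal n, (n.choose ij.1 : ℝ) * dfall lam a ij.1 * dfall lam b ij.2 := by
  rcases eq_or_ne lam 0 with rfl | hlam
  · simp only [dfall_zero_left, (Commute.all a b).add_pow', nsmul_eq_mul, mul_assoc]
  · rw [dfall_eq_pow_mul_descPochhammer hlam, add_div,
      Ring.descPochhammer_smeval_add n (Commute.all (a / lam) (b / lam)), mul_sum]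
    refine sum_congr rfl fun ij hij => ?_
    rw [dfall_eq_pow_mul_descPochhammer hlam, dfall_eq_pow_mul_descPochhammer hlam,
      ← mem_antidiagonal.mp hij, pow_add]
    ring

lemma dfall_mul {c : ℝ} (hc : c ≠ 0) (lam x : ℝ) (n : ℕ) :
    dfall lam (c * x) n = c ^ n * dfall (lam / c) x n := by
  rw [dfall, dfall, pow_eq_prod_const, ← prod_mul_distrib]
  refine prod_congr rfl fun i _ => ?_
  field_simp

lemma ffall_natCast_s10 (t k : ℕ) : ffall t k = t.descFactorial k := by
  rw [ffall, ← descPochhammer_eval_eq_prod_range, descPochhammer_eval_eq_descFactorial]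

lemma coeff_eq_of_sum_mul_ffall_eq {N : ℕ} {c d : ℕ → ℝ}
    (h : ∀ x, ∑ k ∈ range (N + 1), c k * ffall x k = ∑ k ∈ range (N + 1), d k * ffall x k)
    {j : ℕ} (hj : j ≤ N) : c j = d j := by
  induction j using Nat.strong_induction_on with | _ j ih =>
  -- at `x = j` only the terms with `k ≤ j` survive
  have split : ∀ e : ℕ → ℝ, ∑ k ∈ range (N + 1), e k * ffall j k
      = ∑ k ∈ range j, e k * ffall j k + e j * ffall j j := by
    intro e
    rw [← sum_range_succ]
    refine (sum_subset (range_subset_range.2 (by omega)) fun k _ hk => ?_).symm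
    rw [ffall_natCast_s10, Nat.descFactorial_eq_zero_iff_lt.2 (by simpa using hk), Nat.cast_zero,
      mul_zero]
  have lower : ∑ k ∈ range j, c k * ffall j k = ∑ k ∈ range j, d k * ffall j k :=
    sum_congr rfl fun k hk => by rw [ih k (mem_range.1 hk) ((mem_range.1 hk).le.trans hj)]
  have hj' := h j
  rw [split, split, lower] at hj'
  have hself : ffall j j ≠ 0 := by
    rw [ffall_natCast_s10, Nat.descFactorial_self]
    exact_mod_cast j.factorial_ne_zero
  exact mul_right_cancel₀ hself (add_left_cancel hj')

lemma dfall_mul_add_eq_sum_ffall {c : ℝ} (hc : c ≠ 0) (lam r : ℝ) (S : ℕ → ℕ → ℝ)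
    (hS : ∀ x N, dfall (lam / c) x N = ∑ k ∈ range (N + 1), S N k * ffall x k) (n : ℕ) (x : ℝ) :
    dfall lam (c * x + r) n = ∑ k ∈ range (n + 1),
      (∑ l ∈ Icc k n, (n.choose l : ℝ) * dfall lam r (n - l) * c ^ (l - k) * S l k) *
        c ^ k * ffall x k := by
  rw [dfall_add, Nat.sum_antidiagonal_eq_sum_range_succ_mk]
  simp_rw [dfall_mul hc, hS, mul_sum, sum_mul]
  rw [sum_comm' (t' := range (n + 1)) (s' := fun k => Icc k n) (by
    intro l k; simp only [mem_range, mem_Icc]; omega)]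
  refine sum_congr rfl fun k _ => ?_
  refine sum_congr rfl fun l hl => ?_
  rw [← pow_sub_mul_pow c (mem_Icc.1 hl).1]
  ring

theorem stmt10_general (m : ℕ) (hm : 0 < m) (r : ℕ) (lam : ℝ)
    (W : ℕ → ℕ → ℝ)
    (hW : ∀ (x : ℝ) (N : ℕ),
      dfall lam ((m : ℝ) * x + r) N = ∑ k ∈ Finset.range (N + 1), W N k * (m : ℝ) ^ k * ffall x k)
    (S : ℕ → ℕ → ℝ)
    (hS : ∀ (x : ℝ) (N : ℕ),
      dfall (lam / m) x N = ∑ k ∈ Finset.range (N + 1), S N k * ffall x k)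
    (n j : ℕ) (hj : j ≤ n) :
    W n j = ∑ l ∈ Finset.Icc j n,
      (n.choose l : ℝ) * dfall lam (r : ℝ) (n - l) * (m : ℝ) ^ (l - j) * S l j := by
  have hm' : (m : ℝ) ≠ 0 := Nat.cast_ne_zero.2 hm.ne'
  have expand := dfall_mul_add_eq_sum_ffall hm' lam r S hS n
  exact mul_right_cancel₀ (pow_ne_zero j hm')
    (coeff_eq_of_sum_mul_ffall_eq (fun x => (hW x n).symm.trans (expand x)) hj)

theorem stmt10 (m : ℕ) (hm : 0 < m) (r : ℕ) (lam : ℝ) (hlam : lam ≠ 0)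
    (W : ℕ → ℕ → ℝ)
    (hW : ∀ (x : ℝ) (N : ℕ),
      dfall lam ((m : ℝ) * x + r) N = ∑ k ∈ Finset.range (N + 1), W N k * (m : ℝ) ^ k * ffall x k)
    (S : ℕ → ℕ → ℝ)
    (hS : ∀ (x : ℝ) (N : ℕ),
      dfall (lam / m) x N = ∑ k ∈ Finset.range (N + 1), S N k * ffall x k)
    (n j : ℕ) (hj : j ≤ n) :
    W n j = ∑ l ∈ Finset.Icc j n,
      (n.choose l : ℝ) * dfall lam (r : ℝ) (n - l) * (m : ℝ) ^ (l - j) * S l j :=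
  stmt10_general m hm r lam W hW S hS n j hj
end

section
/- As formal power series (or for |λt| small), the generating function identity Σ_{n≥0} D_{m,λ}(n,x) t^n/n! = (1+λt)^{1/λ} · exp((x/m)((1+λt)^{m/λ} − 1)) holds, where D_{m,λ}(n,x) = Σ_{k=0}^n W_{m,λ}(n,k) x^k and the degenerate Whitney numbers W_{m,λ}(n,k) are defined by (mx+1)_{n,λ} = Σ_{k=0}^n W_{m,λ}(n,k) m^k (x)_k. -/
/-!
Write `Δ` for the forward difference in `j`. At `y = j ∈ ℕ` we have `(j)_i = i! C(j, i)`, and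
`Δ^k C(·, i)` vanishes at `0` unless `i = k`; so the defining identity inverts to
`m^k k! W(n, k) = Δ^k [(mj + 1)_{n,λ}]` at `j = 0`, which is `0` for `k > n`.
The binomial series `Σ_n (c)_{n,λ} t^n / n! = (1 + λt)^{c/λ}` turns the exponential generating
function in `n` of this difference into `Δ^k [(1 + λt)^{1/λ} w^j] = (1 + λt)^{1/λ} (w - 1)^k`,
`w = (1 + λt)^{m/λ}`, and summing against `(x/m)^k / k!` gives the exponential. The
summations may be interchanged because `|Δ^k […]| ≤ 2^k (mk + 1)_{n,-|λ|}`, whose double series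
is the same computation with `(-|λ|, |t|, 2|x/m|)` in place of `(λ, t, x/m)`.
-/

open Finset

open scoped Nat fwdDiff

theorem fwdDiff_iter_natCast_choose_zero {R : Type*} [Ring R] (i k : ℕ) :
    Δ_[1] ^[k] (fun x : ℕ => (x.choose i : R)) 0 = if k = i then 1 else 0 := by
  have h := congrArg (Int.cast : ℤ → R) (fwdDiff_iter_choose_zero i k)
  rw [fwdDiff_iter_eq_sum_shift] at h ⊢
  push_cast at h ⊢
  simpa [apply_ite] using h

theorem fwdDiff_iter_pow {R : Type*} [CommRing R] (w : R) (k y : ℕ) :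
    Δ_[1] ^[k] (fun j : ℕ => w ^ j) y = (w - 1) ^ k * w ^ y := by
  induction k generalizing y with
  | zero => simp
  | succ k ih => simp only [Function.iterate_succ_apply', fwdDiff, ih, pow_succ]; ring

theorem hasSum_fwdDiff_iter {ι M G : Type*} [AddCommMonoid M] [AddCommGroup G]
    [TopologicalSpace G] [IsTopologicalAddGroup G] {a : ι → M → G} {A : M → G} (h : M)
    (ha : ∀ j, HasSum (fun i => a i j) (A j)) (k : ℕ) (y : M) :
    HasSum (fun i => Δ_[h] ^[k] (a i) y) (Δ_[h] ^[k] A y) := by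
  simp only [fwdDiff_iter_eq_sum_shift]
  exact hasSum_sum fun j _ => (ha _).const_smul _

theorem norm_fwdDiff_iter_le {G : Type*} [SeminormedAddCommGroup G] {f : ℕ → G} {B : ℝ}
    {k y : ℕ} (hf : ∀ j ≤ k, ‖f (y + j)‖ ≤ B) :
    ‖Δ_[1] ^[k] f y‖ ≤ 2 ^ k * B := by
  have h2 : (2 : ℝ) ^ k = ∑ j ∈ range (k + 1), (k.choose j : ℝ) := by
    exact_mod_cast (Nat.sum_range_choose k).symm
  rw [fwdDiff_iter_eq_sum_shift, h2, sum_mul]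
  refine (norm_sum_le _ _).trans (sum_le_sum fun j hj => ?_)
  refine (norm_zsmul_le _ _).trans ?_
  simp only [norm_mul, norm_pow, norm_neg, norm_one, one_pow, one_mul, Int.norm_natCast,
    smul_eq_mul, mul_one]
  exact mul_le_mul_of_nonneg_left (hf j (Nat.lt_succ_iff.mp (mem_range.mp hj))) (Nat.cast_nonneg _)

theorem fwdDiff_iter_mul_const {M R : Type*} [AddCommMonoid M] [Ring R] (h : M) (f : M → R)
    (c : R) (k : ℕ) (y : M) : Δ_[h] ^[k] (fun x => f x * c) y = Δ_[h] ^[k] f y * c := by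
  simp only [fwdDiff_iter_eq_sum_shift, sum_mul, smul_mul_assoc]

theorem fwdDiff_iter_const_mul {M R : Type*} [AddCommMonoid M] [Ring R] (h : M) (f : M → R)
    (c : R) (k : ℕ) (y : M) : Δ_[h] ^[k] (fun x => c * f x) y = c * Δ_[h] ^[k] f y := by
  simp only [fwdDiff_iter_eq_sum_shift, mul_sum, mul_smul_comm]

theorem ffall_eq_factorial_mul_choose (x : ℝ) (n : ℕ) : ffall x n = n ! * Ring.choose x n := by
  rw [ffall, ← descPochhammer_eval_eq_prod_range, ← nsmul_eq_mul,
    ← Ring.descPochhammer_eq_factorial_smul_choose, ← Polynomial.aeval_eq_smeval,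
    ← descPochhammer_map (algebraMap ℤ ℝ), Polynomial.eval_map_algebraMap]

theorem dfall_eq_pow_mul_ffall {lam : ℝ} (hlam : lam ≠ 0) (c : ℝ) (n : ℕ) :
    dfall lam c n = lam ^ n * ffall (c / lam) n := by
  rw [dfall, ffall, ← card_range n, ← prod_const, card_range, ← prod_mul_distrib]
  exact prod_congr rfl fun i _ => by field_simp

theorem hasSum_dfall_mul_pow_div_factorial {lam t : ℝ} (hlam : lam ≠ 0) (ht : |lam * t| < 1)
    (c : ℝ) : HasSum (fun n => dfall lam c n * t ^ n / n !) ((1 + lam * t) ^ (c / lam)) := by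
  have h := (Real.one_add_rpow_hasFPowerSeriesOnBall_zero (a := c / lam)).hasSum
    (y := lam * t) (by simpa [Metric.eball, edist_dist, ENNReal.ofReal_lt_one] using ht)
  simp only [binomialSeries, FormalMultilinearSeries.ofScalars_apply_eq, zero_add] at h
  have key : ∀ n, dfall lam c n * t ^ n / n ! = Ring.choose (c / lam) n • (lam * t) ^ n := by
    intro n
    rw [dfall_eq_pow_mul_ffall hlam, ffall_eq_factorial_mul_choose, smul_eq_mul]
    field_simp
    ring
  rwa [← funext key] at h

theorem rpow_mul_natCast_add_one_div {b : ℝ} (hb : 0 < b) (a lam : ℝ) (j : ℕ) :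
    b ^ ((a * j + 1) / lam) = b ^ (1 / lam) * (b ^ (a / lam)) ^ j := by
  rw [← Real.rpow_natCast, ← Real.rpow_mul hb.le, ← Real.rpow_add hb]
  ring_nf

theorem hasSum_dfall_mul_add_one {lam t : ℝ} (hlam : lam ≠ 0) (ht : |lam * t| < 1) (a : ℝ)
    (j : ℕ) : HasSum (fun n => dfall lam (a * j + 1) n * t ^ n / n !)
      ((1 + lam * t) ^ (1 / lam) * ((1 + lam * t) ^ (a / lam)) ^ j) := by
  rw [← rpow_mul_natCast_add_one_div (by linarith [neg_abs_le (lam * t)])]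
  exact hasSum_dfall_mul_pow_div_factorial hlam ht _

theorem abs_dfall_le_s17 {lam c c' : ℝ} (hc : 0 ≤ c) (hcc' : c ≤ c') (n : ℕ) :
    |dfall lam c n| ≤ dfall (-|lam|) c' n := by
  rw [dfall, abs_prod]
  refine prod_le_prod (fun _ _ => abs_nonneg _) fun i _ => ?_
  calc |c - i * lam| ≤ |c| + |i * lam| := abs_sub _ _
    _ = c + i * |lam| := by rw [abs_of_nonneg hc, abs_mul, Nat.abs_cast]
    _ ≤ c' - i * -|lam| := by linarith

noncomputable def scaledWhitney (lam a : ℝ) (n k : ℕ) : ℝ :=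
  Δ_[1] ^[k] (fun j : ℕ => dfall lam (a * j + 1) n) 0

theorem scaledWhitney_eq {lam m : ℝ} {W : ℕ → ℕ → ℝ}
    (hW : ∀ (y : ℝ) (N : ℕ),
      dfall lam (m * y + 1) N = ∑ k ∈ range (N + 1), W N k * m ^ k * ffall y k) (n k : ℕ) :
    scaledWhitney lam m n k = if k ≤ n then W n k * m ^ k * k ! else 0 := by
  have hexp : (fun j : ℕ => dfall lam (m * j + 1) n)
      = ∑ i ∈ range (n + 1), (W n i * m ^ i * i !) • fun j : ℕ => (j.choose i : ℝ) := by
    funext j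
    simp only [Finset.sum_apply, Pi.smul_apply, smul_eq_mul, hW, ffall_eq_factorial_mul_choose,
      Ring.choose_natCast]
    exact sum_congr rfl fun i _ => by ring
  simp only [scaledWhitney, hexp, fwdDiff_iter_finsetSum, fwdDiff_iter_const_smul,
    Finset.sum_apply, Pi.smul_apply, fwdDiff_iter_natCast_choose_zero, smul_eq_mul, mul_ite,
    mul_one, mul_zero, sum_ite_eq, mem_range, Nat.lt_succ_iff]

theorem abs_scaledWhitney_le (lam : ℝ) {a : ℝ} (ha : 0 ≤ a) (n k : ℕ) :
    |scaledWhitney lam a n k| ≤ 2 ^ k * dfall (-|lam|) (a * k + 1) n := by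
  rw [← Real.norm_eq_abs]
  refine norm_fwdDiff_iter_le fun j hj => ?_
  rw [Real.norm_eq_abs, zero_add]
  exact abs_dfall_le_s17 (by positivity) (by gcongr) n

theorem hasSum_scaledWhitney {lam t : ℝ} (hlam : lam ≠ 0) (ht : |lam * t| < 1) (a : ℝ)
    (k : ℕ) :
    HasSum (fun n => scaledWhitney lam a n k * t ^ n / n !)
      ((1 + lam * t) ^ (1 / lam) * ((1 + lam * t) ^ (a / lam) - 1) ^ k) := by
  have h := hasSum_fwdDiff_iter 1 (hasSum_dfall_mul_add_one hlam ht a) k 0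
  simpa only [scaledWhitney, mul_div_assoc, fwdDiff_iter_mul_const, fwdDiff_iter_const_mul,
    fwdDiff_iter_pow, pow_zero, mul_one] using h

theorem summable_scaledWhitney {lam t : ℝ} (hlam : lam ≠ 0) (ht : |lam * t| < 1) {a : ℝ}
    (ha : 0 ≤ a) (z : ℝ) :
    Summable (Function.uncurry fun k n : ℕ =>
      z ^ k / k ! * (scaledWhitney lam a n k * t ^ n / n !)) := by
  set L := -|lam|
  have hL : L ≠ 0 := by simpa [L] using hlam
  have hLt : |(L * |t|)| < 1 := by simpa [L, abs_mul] using ht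
  set g : ℕ → ℕ → ℝ := fun k n =>
    (2 * |z|) ^ k / k ! * (dfall L (a * k + 1) n * |t| ^ n / n !)
  have hg : ∀ k, HasSum (g k)
      ((2 * |z|) ^ k / k ! * ((1 + L * |t|) ^ (1 / L) * ((1 + L * |t|) ^ (a / L)) ^ k)) :=
    fun k => (hasSum_dfall_mul_add_one hL hLt a k).mul_left _
  have hg_nonneg : 0 ≤ Function.uncurry g := fun p => by
    have hdfall := (abs_nonneg _).trans
      (abs_dfall_le_s17 (lam := lam) (c := a * p.1 + 1) (by positivity) le_rfl p.2)
    simp only [Function.uncurry, g, Pi.zero_apply]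
    positivity
  have hg_summable : Summable (Function.uncurry g) := by
    refine (summable_prod_of_nonneg hg_nonneg).mpr ⟨fun k => (hg k).summable, ?_⟩
    simp only [Function.uncurry_apply_pair, fun k => (hg k).tsum_eq]
    refine ((Real.summable_pow_div_factorial (2 * |z| * (1 + L * |t|) ^ (a / L))).mul_left
      ((1 + L * |t|) ^ (1 / L))).congr fun k => ?_
    ring
  refine hg_summable.of_norm_bounded fun ⟨k, n⟩ => ?_
  simp only [Function.uncurry_apply_pair, g, Real.norm_eq_abs, abs_mul, abs_div, abs_pow,
    Nat.abs_cast]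
  calc |z| ^ k / k ! * (|scaledWhitney lam a n k| * |t| ^ n / n !)
      ≤ |z| ^ k / k ! * (2 ^ k * dfall L (a * k + 1) n * |t| ^ n / n !) := by
        gcongr
        exact abs_scaledWhitney_le lam ha n k
    _ = (2 * |z|) ^ k / k ! * (dfall L (a * k + 1) n * |t| ^ n / n !) := by ring

theorem tsum_tsum_scaledWhitney {lam t : ℝ} (hlam : lam ≠ 0) (ht : |lam * t| < 1) {a : ℝ}
    (ha : 0 ≤ a) (z : ℝ) :
    ∑' n, ∑' k, z ^ k / k ! * (scaledWhitney lam a n k * t ^ n / n !)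
      = (1 + lam * t) ^ (1 / lam) * Real.exp (z * ((1 + lam * t) ^ (a / lam) - 1)) := by
  rw [(summable_scaledWhitney hlam ht ha z).tsum_comm]
  have hexp := (NormedSpace.expSeries_div_hasSum_exp
    (z * ((1 + lam * t) ^ (a / lam) - 1))).mul_left ((1 + lam * t) ^ (1 / lam))
  rw [← Real.exp_eq_exp_ℝ] at hexp
  rw [← hexp.tsum_eq]
  refine tsum_congr fun k => ?_
  rw [tsum_mul_left, (hasSum_scaledWhitney hlam ht a k).tsum_eq, mul_pow]
  ring

theorem stmt17 (m : ℕ) (hm : 0 < m) (lam : ℝ) (hlam : lam ≠ 0) (x : ℝ)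
    (W : ℕ → ℕ → ℝ)
    (hW : ∀ (y : ℝ) (N : ℕ),
      dfall lam ((m : ℝ) * y + 1) N = ∑ k ∈ Finset.range (N + 1), W N k * (m : ℝ) ^ k * ffall y k) :
    ∃ ε > (0 : ℝ), ∀ t : ℝ, |t| < ε →
      ∑' n : ℕ, (∑ k ∈ Finset.range (n + 1), W n k * x ^ k) * t ^ n / (Nat.factorial n)
        = (1 + lam * t) ^ ((1 : ℝ) / lam) *
            Real.exp ((x / m) * ((1 + lam * t) ^ ((m : ℝ) / lam) - 1)) := by
  have hL : 0 < |lam| := abs_pos.mpr hlam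
  refine ⟨1 / |lam|, by positivity, fun t ht => ?_⟩
  have hlamt : |lam * t| < 1 := by rwa [abs_mul, ← lt_div_iff₀' hL]
  rw [← tsum_tsum_scaledWhitney hlam hlamt m.cast_nonneg (x / m)]
  refine tsum_congr fun n => ?_
  rw [tsum_eq_sum (s := range (n + 1)), sum_mul, sum_div]
  · refine sum_congr rfl fun k hk => ?_
    have hm0 : (m : ℝ) ≠ 0 := Nat.cast_ne_zero.mpr hm.ne'
    rw [scaledWhitney_eq hW, if_pos (Nat.lt_succ_iff.mp (mem_range.mp hk)), div_pow]
    field_simp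
  · intro k hk
    rw [scaledWhitney_eq hW, if_neg (by simpa [Nat.lt_succ_iff] using hk)]
    simp
end

section
/- For k ≥ 0, the degenerate Whitney numbers of the second kind have exponential generating function e_λ(t) · (1/k!) ((e_λ^m(t)−1)/m)^k = Σ_{n≥k} W_{m,λ}(n,k) t^n/n!, as formal power series in t. -/
/-!
Evaluating the defining identity at `y = 0, 1, …, k` and taking the `k`-th finite difference
isolates the `k`-th column: the `k`-th difference at `0` of the falling factorial `(y)_j` is
`k! δ_{jk}`, so `∑ᵢ (-1)^(k-i) C(k,i) (m i + 1)_{N,λ} = m^k k! W(N,k)` for `N ≥ k`, and `0` for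
`N < k`. Summing against `t^N / N!` with the binomial series
`∑_N (a)_{N,λ} t^N / N! = e_λ^a(t)` gives `e_λ(t) ∑ᵢ (-1)^(k-i) C(k,i) e_λ^m(t)^i`, which is
`e_λ(t) (e_λ^m(t) - 1)^k`.
-/

open Finset

open scoped Nat

theorem factorial_mul_ringChoose (a : ℝ) (n : ℕ) :
    (n ! : ℝ) * Ring.choose a n = ∏ i ∈ range n, (a - i) := by
  rw [Ring.choose_eq_smul, smul_eq_mul, ← mul_assoc, mul_inv_cancel₀ (by positivity), one_mul,
    ← Polynomial.aeval_eq_smeval, ← descPochhammer_eval_eq_prod_range, Polynomial.aeval_def,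
    ← Polynomial.eval_map, descPochhammer_map]

theorem dfall_eq_pow_mul_ringChoose {lam : ℝ} (hlam : lam ≠ 0) (a : ℝ) (n : ℕ) :
    dfall lam a n = lam ^ n * (n ! * Ring.choose (a / lam) n) := by
  rw [factorial_mul_ringChoose, ← card_range n, ← prod_const, card_range, ← prod_mul_distrib, dfall]
  refine prod_congr rfl fun i _ => ?_
  field_simp

theorem hasSum_dfall_div_factorial_mul_pow {lam t : ℝ} (hlam : lam ≠ 0) (ht : |lam * t| < 1)
    (a : ℝ) : HasSum (fun n => dfall lam a n / n ! * t ^ n) ((1 + lam * t) ^ (a / lam)) := by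
  have h := Real.one_add_rpow_hasFPowerSeriesOnBall_zero (a := a / lam) |>.hasSum
    (y := lam * t) (by
      rw [Metric.mem_eball, edist_dist, dist_zero_right, Real.norm_eq_abs]
      exact ENNReal.ofReal_lt_one.mpr ht)
  simp only [zero_add, binomialSeries_apply, List.ofFn_const, List.prod_replicate, smul_eq_mul] at h
  refine h.congr_fun fun n => ?_
  rw [dfall_eq_pow_mul_ringChoose hlam]
  field_simp
  ring

theorem ffall_natCast_s18 (n j : ℕ) : ffall n j = j ! * n.choose j := by
  rw [ffall, ← descPochhammer_eval_eq_prod_range, descPochhammer_eval_eq_descFactorial,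
    Nat.descFactorial_eq_factorial_mul_choose]
  push_cast
  ring

theorem sum_alternating_choose_mul_choose (k j : ℕ) :
    ∑ i ∈ range (k + 1), (-1 : ℝ) ^ (k - i) * k.choose i * i.choose j = if k = j then 1 else 0 := by
  have h := fwdDiff_iter_choose_zero j k
  rw [fwdDiff_iter_eq_sum_shift] at h
  simp only [zero_add, smul_eq_mul, mul_one] at h
  exact_mod_cast h

theorem sum_alternating_dfall_eq {m : ℕ} {lam : ℝ} {W : ℕ → ℕ → ℝ}
    (hW : ∀ (y : ℝ) (N : ℕ),
      dfall lam ((m : ℝ) * y + 1) N = ∑ j ∈ range (N + 1), W N j * (m : ℝ) ^ j * ffall y j)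
    (k N : ℕ) :
    ∑ i ∈ range (k + 1), (-1 : ℝ) ^ (k - i) * k.choose i * dfall lam (m * i + 1) N
      = if k ≤ N then W N k * m ^ k * k ! else 0 := by
  simp_rw [hW, ffall_natCast_s18, mul_sum]
  rw [sum_comm]
  have hcol : ∀ j, ∑ i ∈ range (k + 1),
      (-1 : ℝ) ^ (k - i) * k.choose i * (W N j * m ^ j * (j ! * i.choose j))
        = if k = j then W N k * m ^ k * k ! else 0 := fun j => calc
    _ = W N j * m ^ j * j !
          * ∑ i ∈ range (k + 1), (-1 : ℝ) ^ (k - i) * k.choose i * i.choose j := by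
      rw [mul_sum]
      exact sum_congr rfl fun i _ => by ring
    _ = _ := by
      rw [sum_alternating_choose_mul_choose]
      split_ifs with h <;> simp [h]
  simp_rw [hcol, sum_ite_eq, mem_range, Nat.lt_succ_iff]

theorem one_add_rpow_mul_add {lam t : ℝ} (hpos : 0 < 1 + lam * t) (m : ℝ) (i : ℕ) :
    (1 + lam * t) ^ ((m * i + 1) / lam)
      = (1 + lam * t) ^ (1 / lam) * ((1 + lam * t) ^ (m / lam)) ^ i := by
  rw [← Real.rpow_natCast, ← Real.rpow_mul hpos.le, ← Real.rpow_add hpos]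
  ring_nf

theorem hasSum_sum_alternating_dfall {lam t : ℝ} (hlam : lam ≠ 0) (ht : |lam * t| < 1)
    (m : ℝ) (k : ℕ) :
    HasSum (fun N => (∑ i ∈ range (k + 1), (-1 : ℝ) ^ (k - i) * k.choose i
        * dfall lam (m * i + 1) N) / N ! * t ^ N)
      ((1 + lam * t) ^ (1 / lam) * ((1 + lam * t) ^ (m / lam) - 1) ^ k) := by
  have hpos : 0 < 1 + lam * t := by linarith [(abs_lt.mp ht).1]
  have h := hasSum_sum fun i (_ : i ∈ range (k + 1)) =>
    (hasSum_dfall_div_factorial_mul_pow hlam ht (m * i + 1)).mul_left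
      ((-1 : ℝ) ^ (k - i) * k.choose i)
  have hval : (1 + lam * t) ^ (1 / lam) * ((1 + lam * t) ^ (m / lam) - 1) ^ k
      = ∑ i ∈ range (k + 1), (-1) ^ (k - i) * k.choose i * (1 + lam * t) ^ ((m * i + 1) / lam) := by
    rw [sub_eq_add_neg, add_pow, mul_sum]
    refine sum_congr rfl fun i _ => ?_
    rw [one_add_rpow_mul_add hpos]
    ring
  rw [hval]
  refine h.congr_fun fun N => ?_
  rw [sum_div, sum_mul]
  exact sum_congr rfl fun i _ => by ring

theorem hasSum_column_egf {m : ℕ} (hm : 0 < m) {lam : ℝ} (hlam : lam ≠ 0) {W : ℕ → ℕ → ℝ}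
    (hW : ∀ (y : ℝ) (N : ℕ),
      dfall lam ((m : ℝ) * y + 1) N = ∑ j ∈ range (N + 1), W N j * (m : ℝ) ^ j * ffall y j)
    (k : ℕ) {t : ℝ} (ht : |lam * t| < 1) :
    HasSum (fun n => W (k + n) k * t ^ (k + n) / (k + n)!)
      ((1 + lam * t) ^ (1 / lam) * (1 / k ! * (((1 + lam * t) ^ (m / lam) - 1) / m) ^ k)) := by
  have h := hasSum_sum_alternating_dfall hlam ht m k
  simp_rw [sum_alternating_dfall_eq hW] at h
  rw [← (add_right_injective k).hasSum_iff fun N hN => by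
    rw [if_neg fun hle => hN ⟨N - k, Nat.add_sub_cancel' hle⟩, zero_div, zero_mul]] at h
  have hm' : (m : ℝ) ≠ 0 := Nat.cast_ne_zero.mpr hm.ne'
  have hval : (1 + lam * t) ^ (1 / lam) * (1 / k ! * (((1 + lam * t) ^ (m / lam) - 1) / m) ^ k)
      = (1 + lam * t) ^ (1 / lam) * ((1 + lam * t) ^ (m / lam) - 1) ^ k / (m ^ k * k !) := by
    rw [div_pow]
    field_simp
  rw [hval]
  refine (h.div_const _).congr_fun fun n => ?_
  simp only [Function.comp_apply, Nat.le_add_right, if_true]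
  field_simp

theorem stmt18 (m : ℕ) (hm : 0 < m) (lam : ℝ) (hlam : lam ≠ 0) (k : ℕ)
    (W : ℕ → ℕ → ℝ)
    (hW : ∀ (y : ℝ) (N : ℕ),
      dfall lam ((m : ℝ) * y + 1) N = ∑ j ∈ Finset.range (N + 1), W N j * (m : ℝ) ^ j * ffall y j) :
    ∃ ε > (0 : ℝ), ∀ t : ℝ, |t| < ε →
      (1 + lam * t) ^ ((1 : ℝ) / lam) *
          ((1 / (Nat.factorial k : ℝ)) * (((1 + lam * t) ^ ((m : ℝ) / lam) - 1) / m) ^ k)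
        = ∑' n : ℕ, W (k + n) k * t ^ (k + n) / (Nat.factorial (k + n)) := by
  refine ⟨1 / |lam|, by positivity, fun t ht => ?_⟩
  have hlt : |lam * t| < 1 := by
    rw [abs_mul]
    rwa [lt_div_iff₀' (abs_pos.mpr hlam)] at ht
  exact ((hasSum_column_egf hm hlam hW k hlt).tsum_eq).symm
end
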